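/- arXiv:2410.20064 — 6 statements merged into one kernel-verified Lean document; each statement's English description precedes it below -/
import Mathlib

section
/- The generating function for overpartitions into odd parts satisfies ∏_{n=1}^∞ (1+q^{2n-1})/(1-q^{2n-1}) = ∏_{n=1}^∞ (1+q^n)^{v(n)}, where v(n) = 1 + v₂(4n-2) if n is odd and v(n) = v₂(4n-2) if n is even. -/
/-- The exponent `v(n)`: `1 + v₂(4n-2)` if `n` is odd, `v₂(4n-2)` if `n` is even. -/
def vOver (n : ℕ) : ℕ :=
  if Odd n then padicValNat 2 (4 * n - 2) + 1 else padicValNat 2 (4 * n - 2)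

open Filter Topology

/-- If `‖f n - 1‖` is summable, then `log (f n)` is summable. -/
lemma aux_summable_clog {f : ℕ → ℂ} (hf : Summable fun n => ‖f n - 1‖) :
    Summable fun n => Complex.log (f n) := by
  refine Summable.of_norm_bounded_eventually_nat (g := fun n => (3/2) * ‖f n - 1‖)
    (hf.mul_left _) ?_
  have h0 : Tendsto (fun n => ‖f n - 1‖) atTop (𝓝 0) := hf.tendsto_atTop_zero
  filter_upwards [h0.eventually_lt_const (by norm_num : (0:ℝ) < 1/2)] with n hn
  have h := Complex.norm_log_one_add_half_le_self (z := f n - 1) (by linarith)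
  simpa using h

/-- Products of `1 + small` terms converge to an exponential (hence nonzero) value. -/
lemma aux_hasProd_exp {f : ℕ → ℂ} (h0 : ∀ n, f n ≠ 0)
    (hf : Summable fun n => ‖f n - 1‖) :
    HasProd f (Complex.exp (∑' n, Complex.log (f n))) := by
  have hl := aux_summable_clog hf
  exact Complex.hasProd_of_hasSum_log h0 hl.hasSum

/-- `∏_{n≥1} (1+q^{2n-1})/(1-q^{2n-1}) = ∏_{n≥1} (1+q^n)^{v(n)}` for `|q| < 1`. -/
theorem overpartition_odd_genfun_eq (q : ℂ) (hq : ‖q‖ < 1) :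
    (∏' n : ℕ, (1 + q ^ (2 * n + 1)) / (1 - q ^ (2 * n + 1))) =
      ∏' n : ℕ, (1 + q ^ (n + 1)) ^ vOver (n + 1) := by
  have hq0 : (0:ℝ) ≤ ‖q‖ := norm_nonneg q
  -- norms of powers
  have hqk : ∀ k : ℕ, ‖q ^ (k + 1)‖ ≤ ‖q‖ := by
    intro k
    rw [norm_pow]
    calc ‖q‖ ^ (k+1) ≤ ‖q‖ ^ 1 := pow_le_pow_of_le_one hq0 hq.le (by omega)
    _ = ‖q‖ := pow_one _
  have hqk1 : ∀ k : ℕ, ‖q ^ (k + 1)‖ < 1 := fun k => lt_of_le_of_lt (hqk k) hq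
  -- nonvanishing of factors
  have hp : ∀ z : ℂ, ‖z‖ < 1 → 1 + z ≠ 0 := by
    intro z hz h
    have hz1 : z = -1 := by linear_combination h
    rw [hz1] at hz; simp at hz
  have hm : ∀ z : ℂ, ‖z‖ < 1 → 1 - z ≠ 0 := by
    intro z hz h
    have hz1 : z = 1 := by linear_combination -h
    rw [hz1] at hz; simp at hz
  -- summability of geometric-type series
  have hgeo : Summable fun n : ℕ => ‖q‖ ^ n := summable_geometric_of_lt_one hq0 hq
  have hSg : ∀ c : ℝ, Summable fun n : ℕ => c * ‖q‖ ^ (n + 1) := by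
    intro c
    exact (hgeo.mul_left (c * ‖q‖)).congr (fun n => by ring)
  have hbound : ∀ (c : ℝ) (g : ℕ → ℝ), (∀ n, 0 ≤ g n) →
      (∀ n, g n ≤ c * ‖q‖ ^ (n + 1)) → Summable g := by
    intro c g hg0 hgle
    exact Summable.of_nonneg_of_le hg0 hgle (hSg c)
  -- the factor families
  set A : ℕ → ℂ := fun n => 1 + q ^ (2 * n + 1) with hA_def
  set B : ℕ → ℂ := fun n => 1 - q ^ (2 * n + 1) with hB_def
  set C : ℕ → ℂ := fun n => 1 + q ^ (n + 1) with hC_def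
  set D : ℕ → ℂ := fun n => 1 - q ^ (2 * n + 2) with hD_def
  set E : ℕ → ℂ := fun n => 1 - q ^ (n + 1) with hE_def
  set F : ℕ → ℂ := fun n => 1 + q ^ (2 * n + 2) with hF_def
  set G : ℕ → ℂ := fun n => (1 + q ^ (2 * n + 1)) / (1 - q ^ (2 * n + 1)) with hG_def
  have hA0 : ∀ n, A n ≠ 0 := fun n => hp _ (by simpa using hqk1 (2 * n))
  have hB0 : ∀ n, B n ≠ 0 := fun n => hm _ (by simpa using hqk1 (2 * n))
  have hC0 : ∀ n, C n ≠ 0 := fun n => hp _ (hqk1 n)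
  have hD0 : ∀ n, D n ≠ 0 := fun n => hm _ (by simpa using hqk1 (2 * n + 1))
  have hE0 : ∀ n, E n ≠ 0 := fun n => hm _ (hqk1 n)
  have hF0 : ∀ n, F n ≠ 0 := fun n => hp _ (by simpa using hqk1 (2 * n + 1))
  have hG0 : ∀ n, G n ≠ 0 := fun n => div_ne_zero (hA0 n) (hB0 n)
  -- summability of ‖· - 1‖
  have hnormpow : ∀ (k : ℕ), ‖q ^ k‖ = ‖q‖ ^ k := fun k => norm_pow q k
  have hsA : Summable fun n => ‖A n - 1‖ := by
    refine hbound 1 _ (fun n => norm_nonneg _) fun n => ?_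
    have : A n - 1 = q ^ (2 * n + 1) := by rw [hA_def]; ring
    rw [this, hnormpow, one_mul]
    exact pow_le_pow_of_le_one hq0 hq.le (by omega)
  have hsB : Summable fun n => ‖B n - 1‖ := by
    refine hbound 1 _ (fun n => norm_nonneg _) fun n => ?_
    have : B n - 1 = -q ^ (2 * n + 1) := by rw [hB_def]; ring
    rw [this, norm_neg, hnormpow, one_mul]
    exact pow_le_pow_of_le_one hq0 hq.le (by omega)
  have hsC : Summable fun n => ‖C n - 1‖ := by
    refine hbound 1 _ (fun n => norm_nonneg _) fun n => ?_
    have : C n - 1 = q ^ (n + 1) := by rw [hC_def]; ring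
    rw [this, hnormpow, one_mul]
  have hsD : Summable fun n => ‖D n - 1‖ := by
    refine hbound 1 _ (fun n => norm_nonneg _) fun n => ?_
    have : D n - 1 = -q ^ (2 * n + 2) := by rw [hD_def]; ring
    rw [this, norm_neg, hnormpow, one_mul]
    exact pow_le_pow_of_le_one hq0 hq.le (by omega)
  have hsE : Summable fun n => ‖E n - 1‖ := by
    refine hbound 1 _ (fun n => norm_nonneg _) fun n => ?_
    have : E n - 1 = -q ^ (n + 1) := by rw [hE_def]; ring
    rw [this, norm_neg, hnormpow, one_mul]
  have hsF : Summable fun n => ‖F n - 1‖ := by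
    refine hbound 1 _ (fun n => norm_nonneg _) fun n => ?_
    have : F n - 1 = q ^ (2 * n + 2) := by rw [hF_def]; ring
    rw [this, hnormpow, one_mul]
    exact pow_le_pow_of_le_one hq0 hq.le (by omega)
  have hBlow : ∀ n, 1 - ‖q‖ ≤ ‖B n‖ := by
    intro n
    have h1 : ‖q ^ (2 * n + 1)‖ ≤ ‖q‖ := hqk (2 * n)
    have h2 : ‖(1:ℂ)‖ - ‖q ^ (2 * n + 1)‖ ≤ ‖(1:ℂ) - q ^ (2 * n + 1)‖ :=
      norm_sub_norm_le _ _
    rw [norm_one] at h2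
    calc 1 - ‖q‖ ≤ 1 - ‖q ^ (2 * n + 1)‖ := by linarith
    _ ≤ ‖B n‖ := h2
  have hsG : Summable fun n => ‖G n - 1‖ := by
    refine hbound (2 / (1 - ‖q‖)) _ (fun n => norm_nonneg _) fun n => ?_
    have hb : (1 : ℂ) - q ^ (2 * n + 1) ≠ 0 := by
      have := hB0 n; simpa only [hB_def] using this
    have hGn : G n - 1 = 2 * q ^ (2 * n + 1) / B n := by
      simp only [hG_def, hB_def]
      rw [div_sub_one hb]
      congr 1
      ring
    rw [hGn, norm_div, norm_mul, hnormpow]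
    have hB' := hBlow n
    have hq1 : (0:ℝ) < 1 - ‖q‖ := by linarith
    have hBpos : (0:ℝ) < ‖B n‖ := lt_of_lt_of_le hq1 hB'
    rw [div_le_iff₀ hBpos]
    have h2 : (‖(2:ℂ)‖ : ℝ) = 2 := by simp
    rw [h2]
    have hpow : ‖q‖ ^ (2 * n + 1) ≤ ‖q‖ ^ (n + 1) :=
      pow_le_pow_of_le_one hq0 hq.le (by omega)
    have hpn : (0:ℝ) ≤ ‖q‖ ^ (n + 1) := pow_nonneg hq0 _
    have key : (2 / (1 - ‖q‖)) * ‖q‖ ^ (n + 1) * (1 - ‖q‖) = 2 * ‖q‖ ^ (n + 1) := by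
      rw [div_mul_eq_mul_div]
      exact div_mul_cancel₀ _ hq1.ne'
    calc 2 * ‖q‖ ^ (2 * n + 1) ≤ 2 * ‖q‖ ^ (n + 1) := by linarith
    _ = (2 / (1 - ‖q‖)) * ‖q‖ ^ (n + 1) * (1 - ‖q‖) := key.symm
    _ ≤ 2 / (1 - ‖q‖) * ‖q‖ ^ (n + 1) * ‖B n‖ := by
        refine mul_le_mul_of_nonneg_left hB' ?_
        positivity
  -- HasProd facts
  have HA := aux_hasProd_exp hA0 hsA
  have HB := aux_hasProd_exp hB0 hsB
  have HC := aux_hasProd_exp hC0 hsC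
  have HD := aux_hasProd_exp hD0 hsD
  have HE := aux_hasProd_exp hE0 hsE
  have HF := aux_hasProd_exp hF0 hsF
  have HG := aux_hasProd_exp hG0 hsG
  -- tprod values and nonvanishing
  have nA : (∏' n, A n) ≠ 0 := by rw [HA.tprod_eq]; exact Complex.exp_ne_zero _
  have nD : (∏' n, D n) ≠ 0 := by rw [HD.tprod_eq]; exact Complex.exp_ne_zero _
  -- even/odd splittings
  have hEeven : (fun k => E (2 * k)) = B := by
    funext k; rw [hE_def, hB_def]
  have hEodd : (fun k => E (2 * k + 1)) = D := by
    funext k; simp only [hE_def, hD_def]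
  have hCeven : (fun k => C (2 * k)) = A := by
    funext k; rw [hC_def, hA_def]
  have hCodd : (fun k => C (2 * k + 1)) = F := by
    funext k; simp only [hC_def, hF_def]
  have eE : (∏' n, B n) * (∏' n, D n) = ∏' n, E n := by
    have := tprod_even_mul_odd (f := E)
      (by rw [hEeven]; exact HB.multipliable) (by rw [hEodd]; exact HD.multipliable)
    rwa [hEeven, hEodd] at this
  have eC : (∏' n, A n) * (∏' n, F n) = ∏' n, C n := by
    have := tprod_even_mul_odd (f := C)
      (by rw [hCeven]; exact HA.multipliable) (by rw [hCodd]; exact HF.multipliable)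
    rwa [hCeven, hCodd] at this
  -- Euler-type identity: C·E = D pointwise
  have eCE : (∏' n, C n) * (∏' n, E n) = ∏' n, D n := by
    have hpt : ∀ n, C n * E n = D n := by
      intro n
      simp only [hC_def, hE_def, hD_def]
      have hpow : q ^ (n + 1) * q ^ (n + 1) = q ^ (2 * n + 2) := by
        rw [← pow_add]; congr 1; omega
      linear_combination -hpow
    calc (∏' n, C n) * (∏' n, E n) = ∏' n, (C n * E n) :=
        (Multipliable.tprod_mul HC.multipliable HE.multipliable).symm
    _ = ∏' n, D n := tprod_congr hpt
  -- G·B = A pointwise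
  have eGB : (∏' n, G n) * (∏' n, B n) = ∏' n, A n := by
    have hpt : ∀ n, G n * B n = A n := by
      intro n
      simp only [hG_def, hB_def, hA_def]
      exact div_mul_cancel₀ _ (by have := hB0 n; simpa only [hB_def] using this)
    calc (∏' n, G n) * (∏' n, B n) = ∏' n, (G n * B n) :=
        (Multipliable.tprod_mul HG.multipliable HB.multipliable).symm
    _ = ∏' n, A n := tprod_congr hpt
  -- value of vOver
  have hvo : ∀ n : ℕ, vOver (n + 1) = if n % 2 = 0 then 2 else 1 := by
    intro n
    have h42 : 4 * (n + 1) - 2 = 2 * (2 * n + 1) := by omega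
    have hval : padicValNat 2 (4 * (n + 1) - 2) = 1 := by
      rw [h42, padicValNat.mul (p := 2) two_ne_zero (by omega),
        padicValNat.self one_lt_two, padicValNat.eq_zero_of_not_dvd (by omega)]
    rcases Nat.even_or_odd n with he | ho
    · have h2 : n % 2 = 0 := Nat.even_iff.mp he
      have h1 : Odd (n + 1) := by rw [Nat.odd_iff]; omega
      simp only [vOver, if_pos h1, hval]
      rw [if_pos h2]
    · have h2 : n % 2 = 1 := Nat.odd_iff.mp ho
      have h1 : ¬ Odd (n + 1) := by rw [Nat.odd_iff]; omega
      simp only [vOver, if_neg h1, hval]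
      rw [if_neg (by omega : ¬ n % 2 = 0)]
  -- the right-hand side
  set R : ℕ → ℂ := fun n => (1 + q ^ (n + 1)) ^ vOver (n + 1) with hR_def
  have hReven : (fun k => R (2 * k)) = fun k => A k * A k := by
    funext k
    show (1 + q ^ (2 * k + 1)) ^ vOver (2 * k + 1) = A k * A k
    rw [hvo (2 * k), if_pos (by omega : (2 * k) % 2 = 0)]
    simp only [hA_def]
    rw [sq]
  have hRodd : (fun k => R (2 * k + 1)) = F := by
    funext k
    show (1 + q ^ (2 * k + 1 + 1)) ^ vOver (2 * k + 1 + 1) = F k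
    rw [hvo (2 * k + 1), if_neg (by omega : ¬ (2 * k + 1) % 2 = 0), pow_one]
  have HAA : HasProd (fun k => A k * A k)
      ((Complex.exp (∑' n, Complex.log (A n))) * (Complex.exp (∑' n, Complex.log (A n)))) :=
    HA.mul HA
  have eR : (∏' n, A n) * (∏' n, A n) * (∏' n, F n) = ∏' n, R n := by
    have := tprod_even_mul_odd (f := R)
      (by rw [hReven]; exact HAA.multipliable) (by rw [hRodd]; exact HF.multipliable)
    rw [hReven, hRodd] at this
    rw [← this]
    congr 1
    rw [HAA.tprod_eq, HA.tprod_eq]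
  -- assemble
  have hBC : (∏' n, B n) * (∏' n, C n) = 1 := by
    have h2 : ((∏' n, B n) * (∏' n, C n)) * (∏' n, D n) = ∏' n, D n := by
      calc ((∏' n, B n) * (∏' n, C n)) * (∏' n, D n)
          = (∏' n, C n) * ((∏' n, B n) * (∏' n, D n)) := by ring
      _ = (∏' n, C n) * (∏' n, E n) := by rw [eE]
      _ = ∏' n, D n := eCE
    refine mul_right_cancel₀ nD ?_
    rw [one_mul]; exact h2
  have hG_eq : (∏' n, G n) = (∏' n, A n) * (∏' n, C n) := by
    calc (∏' n, G n) = (∏' n, G n) * ((∏' n, B n) * (∏' n, C n)) := by rw [hBC, mul_one]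
    _ = ((∏' n, G n) * (∏' n, B n)) * (∏' n, C n) := by ring
    _ = (∏' n, A n) * (∏' n, C n) := by rw [eGB]
  have hR_eq : (∏' n, R n) = (∏' n, A n) * (∏' n, C n) := by
    rw [← eR, ← eC]; ring
  show (∏' n, G n) = ∏' n, R n
  rw [hG_eq, hR_eq]
end

section
/- The generating function ∏_{n=1}^∞ (1+q^{2n})/(1-q^{2n-1}) for partitions with distinct even parts (odd parts unrestricted) equals ∏_{n=1}^∞ (1+q^n)^{v(n)}, where v(n) = 1 + v₂(4n-2) if n is even and v(n) = v₂(4n-2) if n is odd. -/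
set_option maxHeartbeats 800000

open Complex Filter

/-- If `f n ≠ 0` for all `n` and `∑ ‖f n - 1‖` converges, then `f` has a nonzero product. -/
lemma hasProd_ne_zero_of_summable (f : ℕ → ℂ) (h0 : ∀ n, f n ≠ 0)
    (h2 : Summable fun n => ‖f n - 1‖) :
    ∃ a : ℂ, a ≠ 0 ∧ HasProd f a := by
  have hlog : Summable fun n => Complex.log (f n) := by
    have ht : Tendsto (fun n => ‖f n - 1‖) atTop (nhds 0) := h2.tendsto_atTop_zero
    have hev : ∀ᶠ n in atTop, ‖Complex.log (f n)‖ ≤ 3 / 2 * ‖f n - 1‖ := by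
      filter_upwards [ht.eventually (eventually_le_nhds (by norm_num : (0:ℝ) < 1/2))] with n hn
      have := Complex.norm_log_one_add_half_le_self (z := f n - 1) hn
      simpa using this
    exact Summable.of_norm_bounded_eventually_nat (h2.mul_left (3/2)) hev
  have hexp : HasProd f (Complex.exp (∑' n, Complex.log (f n))) := by
    have h := hlog.hasSum.cexp
    have hfun : (cexp ∘ fun n => Complex.log (f n)) = f := by
      funext n
      exact Complex.exp_log (h0 n)
    rwa [hfun] at h
  exact ⟨_, Complex.exp_ne_zero _, hexp⟩

/-- Inverting a nonzero `HasProd` in `ℂ`. -/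
lemma hasProd_inv_complex {f : ℕ → ℂ} {a : ℂ} (ha : a ≠ 0) (h : HasProd f a) :
    HasProd (fun n => (f n)⁻¹) a⁻¹ := by
  have := ((continuousAt_inv₀ ha).tendsto).comp h
  have heq : ((fun z : ℂ => z⁻¹) ∘ fun s : Finset ℕ => ∏ i ∈ s, f i)
      = fun s : Finset ℕ => ∏ i ∈ s, (f i)⁻¹ := by
    funext s
    simp [Finset.prod_inv_distrib]
  rwa [HasProd, ← heq]

lemma padicValNat_two_mul_odd (m : ℕ) : padicValNat 2 (2 * (2 * m + 1)) = 1 := by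
  haveI : Fact (Nat.Prime 2) := ⟨Nat.prime_two⟩
  rw [padicValNat.mul (by norm_num) (by omega), padicValNat.self (by norm_num),
    padicValNat.eq_zero_of_not_dvd (by omega)]

/-- The exponent `v(n)`: `1 + v₂(4n-2)` if `n` is even, `v₂(4n-2)` if `n` is odd. -/
def vPed (n : ℕ) : ℕ :=
  if Even n then padicValNat 2 (4 * n - 2) + 1 else padicValNat 2 (4 * n - 2)

lemma vPed_odd (k : ℕ) : vPed (2 * k + 1) = 1 := by
  unfold vPed
  rw [if_neg (by simp [Nat.even_add_one, parity_simps])]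
  rw [show 4 * (2 * k + 1) - 2 = 2 * (2 * (2 * k) + 1) from by omega]
  exact padicValNat_two_mul_odd _

lemma vPed_even (k : ℕ) : vPed (2 * k + 2) = 2 := by
  unfold vPed
  rw [if_pos ⟨k + 1, by ring⟩]
  rw [show 4 * (2 * k + 2) - 2 = 2 * (2 * (2 * k + 1) + 1) from by omega,
    padicValNat_two_mul_odd]

/-- `∏_{n≥1} (1+q^{2n})/(1-q^{2n-1}) = ∏_{n≥1} (1+q^n)^{v(n)}` for `|q| < 1`. -/
theorem ped_genfun_eq (q : ℂ) (hq : ‖q‖ < 1) :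
    (∏' n : ℕ, (1 + q ^ (2 * (n + 1))) / (1 - q ^ (2 * n + 1))) =
      ∏' n : ℕ, (1 + q ^ (n + 1)) ^ vPed (n + 1) := by
  have hgeom : Summable fun n : ℕ => ‖q‖ ^ n :=
    summable_geometric_of_lt_one (norm_nonneg q) hq
  have hsum : ∀ g : ℕ → ℕ, (∀ n, n ≤ g n) → Summable fun n : ℕ => ‖q‖ ^ g n := fun g hg =>
    hgeom.of_nonneg_of_le (fun n => pow_nonneg (norm_nonneg q) _)
      (fun n => pow_le_pow_of_le_one (norm_nonneg q) hq.le (hg n))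
  have hlt : ∀ k : ℕ, ‖q ^ (k + 1)‖ < 1 := by
    intro k
    rw [norm_pow]
    exact pow_lt_one₀ (norm_nonneg q) hq (Nat.succ_ne_zero k)
  have hne1 : ∀ z : ℂ, ‖z‖ < 1 → (1 : ℂ) + z ≠ 0 := by
    intro z hz h
    have : z = -1 := by linear_combination h
    rw [this] at hz
    norm_num at hz
  have hne2 : ∀ z : ℂ, ‖z‖ < 1 → (1 : ℂ) - z ≠ 0 := by
    intro z hz h
    have : z = 1 := by linear_combination -h
    rw [this] at hz
    norm_num at hz
  -- the six basic products
  obtain ⟨a, ha0, hA⟩ := hasProd_ne_zero_of_summable (fun n => 1 + q ^ (n + 1))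
    (fun n => hne1 _ (hlt n)) (by
      simpa [norm_pow] using hsum (fun n => n + 1) (fun n => by omega))
  obtain ⟨b, hb0, hB⟩ := hasProd_ne_zero_of_summable (fun n => 1 + q ^ (2 * (n + 1)))
    (fun n => hne1 _ (by rw [show 2 * (n + 1) = 2 * n + 1 + 1 by ring]; exact hlt (2 * n + 1))) (by
      simpa [norm_pow] using hsum (fun n => 2 * (n + 1)) (fun n => by omega))
  obtain ⟨c, hc0, hC⟩ := hasProd_ne_zero_of_summable (fun n => 1 + q ^ (2 * n + 1))
    (fun n => hne1 _ (hlt (2 * n))) (by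
      simpa [norm_pow] using hsum (fun n => 2 * n + 1) (fun n => by omega))
  obtain ⟨d, hd0, hD⟩ := hasProd_ne_zero_of_summable (fun n => 1 - q ^ (2 * n + 1))
    (fun n => hne2 _ (hlt (2 * n))) (by
      simpa [norm_pow, sub_sub_cancel_left] using hsum (fun n => 2 * n + 1) (fun n => by omega))
  obtain ⟨e, he0, hE⟩ := hasProd_ne_zero_of_summable (fun n => 1 - q ^ (n + 1))
    (fun n => hne2 _ (hlt n)) (by
      simpa [norm_pow, sub_sub_cancel_left] using hsum (fun n => n + 1) (fun n => by omega))
  obtain ⟨fv, hf0, hF⟩ := hasProd_ne_zero_of_summable (fun n => 1 - q ^ (2 * (n + 1)))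
    (fun n => hne2 _ (by rw [show 2 * (n + 1) = 2 * n + 1 + 1 by ring]; exact hlt (2 * n + 1))) (by
      simpa [norm_pow, sub_sub_cancel_left] using hsum (fun n => 2 * (n + 1)) (fun n => by omega))
  -- reindexing helpers
  have hBodd : HasProd (fun k : ℕ => 1 + q ^ (2 * k + 1 + 1)) b := by
    have : (fun k : ℕ => 1 + q ^ (2 * k + 1 + 1)) = fun k : ℕ => 1 + q ^ (2 * (k + 1)) := by
      funext k; ring_nf
    rwa [this]
  have hFodd : HasProd (fun k : ℕ => 1 - q ^ (2 * k + 1 + 1)) fv := by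
    have : (fun k : ℕ => 1 - q ^ (2 * k + 1 + 1)) = fun k : ℕ => 1 - q ^ (2 * (k + 1)) := by
      funext k; ring_nf
    rwa [this]
  -- a = c * b and e = d * fv  (even/odd splitting)
  have hacb : a = c * b := hA.unique (hC.even_mul_odd (f := fun n : ℕ => 1 + q ^ (n + 1)) hBodd)
  have hedf : e = d * fv := hE.unique (hD.even_mul_odd (f := fun n : ℕ => 1 - q ^ (n + 1)) hFodd)
  -- fv = a * e
  have hfae : fv = a * e := by
    refine hF.unique ?_
    have h := hA.mul hE
    have hfun : (fun n : ℕ => (1 + q ^ (n + 1)) * (1 - q ^ (n + 1)))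
        = fun n : ℕ => 1 - q ^ (2 * (n + 1)) := by
      funext n; ring
    rwa [hfun] at h
  -- d * a = 1
  have hda : d * a = 1 := by
    have h1 : e * 1 = e * (d * a) := by
      calc e * 1 = e := by ring
        _ = d * fv := hedf
        _ = d * (a * e) := by rw [hfae]
        _ = e * (d * a) := by ring
    have := mul_left_cancel₀ he0 h1
    exact this.symm
  -- LHS has product b * d⁻¹
  have hL : HasProd (fun n : ℕ => (1 + q ^ (2 * (n + 1))) / (1 - q ^ (2 * n + 1))) (b * d⁻¹) := by
    have h := hB.mul (hasProd_inv_complex hd0 hD)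
    have hfun : (fun n : ℕ => (1 + q ^ (2 * (n + 1))) * (1 - q ^ (2 * n + 1))⁻¹)
        = fun n : ℕ => (1 + q ^ (2 * (n + 1))) / (1 - q ^ (2 * n + 1)) := by
      funext n; rw [div_eq_mul_inv]
    rwa [hfun] at h
  -- RHS has product c * (b * b)
  have hR : HasProd (fun n : ℕ => (1 + q ^ (n + 1)) ^ vPed (n + 1)) (c * (b * b)) := by
    have hCe : HasProd (fun k : ℕ => (1 + q ^ (2 * k + 1)) ^ vPed (2 * k + 1)) c := by
      have : (fun k : ℕ => (1 + q ^ (2 * k + 1)) ^ vPed (2 * k + 1))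
          = fun k : ℕ => 1 + q ^ (2 * k + 1) := by
        funext k; rw [vPed_odd, pow_one]
      rwa [this]
    have hBo : HasProd (fun k : ℕ => (1 + q ^ (2 * k + 1 + 1)) ^ vPed (2 * k + 1 + 1)) (b * b) := by
      have h := hBodd.mul hBodd
      have hfun : (fun k : ℕ => (1 + q ^ (2 * k + 1 + 1)) * (1 + q ^ (2 * k + 1 + 1)))
          = fun k : ℕ => (1 + q ^ (2 * k + 1 + 1)) ^ vPed (2 * k + 1 + 1) := by
        funext k
        rw [show 2 * k + 1 + 1 = 2 * k + 2 from rfl, vPed_even, sq]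
      rwa [hfun] at h
    exact hCe.even_mul_odd (f := fun n : ℕ => (1 + q ^ (n + 1)) ^ vPed (n + 1)) hBo
  rw [hL.tprod_eq, hR.tprod_eq]
  have hdinv : d⁻¹ = a := by
    field_simp
    linear_combination -hda
  rw [hdinv, hacb]
  ring
end

section
/- The number of partitions of n into distinct parts equals the sum over all nonnegative integer solutions of t₁ + 2t₂ + ... + n·tₙ = n of ∏_{j=1}^n C(v₂(4j-2), t_j). -/
open Finset

lemma aux_mem_distincts {n : ℕ} {p : n.Partition} :
    p ∈ Nat.Partition.distincts n ↔ p.parts.Nodup := by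
  simp [Nat.Partition.distincts]

lemma aux_parts_le {n : ℕ} (p : n.Partition) {x : ℕ} (hx : x ∈ p.parts) : x ≤ n := by
  have := Multiset.le_sum_of_mem hx
  rwa [p.parts_sum] at this

lemma aux_sum_indicator {n : ℕ} (p : n.Partition) (hp : p.parts.Nodup) :
    ∑ j ∈ univ.filter (fun j : Fin n => (j : ℕ) + 1 ∈ p.parts), ((j : ℕ) + 1) = n := by
  classical
  let s : Finset ℕ := ⟨p.parts, hp⟩
  have h1 : ∑ j ∈ univ.filter (fun j : Fin n => (j : ℕ) + 1 ∈ p.parts), ((j : ℕ) + 1)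
      = ∑ x ∈ s, x := by
    refine Finset.sum_bij (fun j _ => (j : ℕ) + 1) ?_ ?_ ?_ ?_
    · intro a ha
      exact (mem_filter.mp ha).2
    · intro a₁ h₁ a₂ h₂ h
      exact Fin.ext (by omega)
    · intro b hb
      have hb' : b ∈ p.parts := hb
      have h1 : 0 < b := p.parts_pos hb'
      have h2 : b ≤ n := aux_parts_le p hb'
      have hb2 : b - 1 + 1 = b := by omega
      refine ⟨⟨b - 1, by omega⟩, ?_, by simpa using hb2⟩
      simp only [mem_filter, mem_univ, true_and]
      show b - 1 + 1 ∈ p.parts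
      rw [hb2]; exact hb'
    · intro a ha; rfl
  have h2 : ∑ x ∈ s, x = n := by
    have h3 : (∑ x ∈ s, x) = p.parts.sum := by
      show (Multiset.map id p.parts).sum = p.parts.sum
      rw [Multiset.map_id]
    rw [h3, p.parts_sum]
  omega

/-- The number of partitions of `n` into distinct parts equals the sum, over all
nonnegative integer solutions of `t₁ + 2t₂ + ⋯ + n·tₙ = n`, of
`∏_{j=1}^n C(v₂(4j-2), t_j)`. -/
theorem distincts_card_eq_sum (n : ℕ) (hn : 0 < n) :
    (Nat.Partition.distincts n).card =
      ∑ t ∈ (univ : Finset (Fin n → Fin (n + 1))).filter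
          (fun t => ∑ i : Fin n, ((i : ℕ) + 1) * (t i : ℕ) = n),
        ∏ i : Fin n, Nat.choose (padicValNat 2 (4 * ((i : ℕ) + 1) - 2)) (t i : ℕ) := by
  classical
  have hlt : ∀ (c : Prop) [Decidable c], (if c then 1 else 0) < n + 1 := by
    intro c _; split <;> omega
  let f : n.Partition → Fin n → Fin (n + 1) := fun p j =>
    ⟨if (j : ℕ) + 1 ∈ p.parts then 1 else 0, hlt _⟩
  have hfval : ∀ (p : n.Partition) (j : Fin n),
      (f p j : ℕ) = if (j : ℕ) + 1 ∈ p.parts then 1 else 0 := fun _ _ => rfl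
  have hval : ∀ i : Fin n, padicValNat 2 (4 * ((i : ℕ) + 1) - 2) = 1 := by
    intro i
    have h : 4 * ((i : ℕ) + 1) - 2 = 2 * (2 * (i : ℕ) + 1) := by omega
    rw [h, padicValNat.mul (by norm_num) (by omega), padicValNat.self (by norm_num),
      padicValNat.eq_zero_of_not_dvd (by omega)]
  have hprod : ∀ t : Fin n → Fin (n + 1),
      (∏ i : Fin n, Nat.choose (padicValNat 2 (4 * ((i : ℕ) + 1) - 2)) (t i : ℕ))
        = if ∀ i, (t i : ℕ) ≤ 1 then 1 else 0 := by
    intro t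
    by_cases h : ∀ i, (t i : ℕ) ≤ 1
    · rw [if_pos h]
      apply Finset.prod_eq_one
      intro i _
      rw [hval i]
      rcases Nat.le_one_iff_eq_zero_or_eq_one.mp (h i) with h' | h' <;> simp [h']
    · rw [if_neg h]
      push_neg at h
      obtain ⟨i, hi⟩ := h
      apply Finset.prod_eq_zero (mem_univ i)
      rw [hval i]
      exact Nat.choose_eq_zero_of_lt hi
  set A := (univ : Finset (Fin n → Fin (n + 1))).filter
      (fun t => ∑ i : Fin n, ((i : ℕ) + 1) * (t i : ℕ) = n) with hA
  have hsum : (∑ t ∈ A, ∏ i : Fin n,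
        Nat.choose (padicValNat 2 (4 * ((i : ℕ) + 1) - 2)) (t i : ℕ))
      = (A.filter (fun t => ∀ i, (t i : ℕ) ≤ 1)).card := by
    calc (∑ t ∈ A, ∏ i : Fin n,
            Nat.choose (padicValNat 2 (4 * ((i : ℕ) + 1) - 2)) (t i : ℕ))
        = ∑ t ∈ A, if ∀ i, (t i : ℕ) ≤ 1 then 1 else 0 :=
          Finset.sum_congr rfl fun t _ => hprod t
      _ = (A.filter (fun t => ∀ i, (t i : ℕ) ≤ 1)).card := by
          rw [Finset.card_eq_sum_ones]
          exact (Finset.sum_filter _ _).symm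
  rw [hsum]
  clear hsum hprod hval
  refine Finset.card_bij (fun p _ => f p) ?_ ?_ ?_
  · -- maps to
    intro p hp
    have hnd : p.parts.Nodup := aux_mem_distincts.mp hp
    rw [mem_filter]
    constructor
    · rw [hA, mem_filter]
      refine ⟨mem_univ _, ?_⟩
      have hterm : ∀ j : Fin n, ((j : ℕ) + 1) * (f p j : ℕ)
          = if (j : ℕ) + 1 ∈ p.parts then (j : ℕ) + 1 else 0 := by
        intro j
        rw [hfval]
        split <;> ring
      rw [Finset.sum_congr rfl fun j _ => hterm j, ← Finset.sum_filter]
      exact aux_sum_indicator p hnd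
    · intro j
      rw [hfval]
      split <;> omega
  · -- injective
    intro p₁ h₁ p₂ h₂ h
    have key : ∀ j : Fin n,
        (if (j : ℕ) + 1 ∈ p₁.parts then (1 : ℕ) else 0) =
        (if (j : ℕ) + 1 ∈ p₂.parts then (1 : ℕ) else 0) := by
      intro j
      have h' := congrArg Fin.val (congrFun h j)
      rwa [hfval, hfval] at h'
    apply Nat.Partition.ext
    rw [Multiset.Nodup.ext (aux_mem_distincts.mp h₁) (aux_mem_distincts.mp h₂)]
    intro a
    constructor
    · intro ha
      have h1 : 0 < a := p₁.parts_pos ha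
      have h2 : a ≤ n := aux_parts_le p₁ ha
      have hk := key ⟨a - 1, by omega⟩
      have ha' : ((⟨a - 1, by omega⟩ : Fin n) : ℕ) + 1 = a := by
        show a - 1 + 1 = a; omega
      rw [ha'] at hk
      by_contra hc
      rw [if_pos ha, if_neg hc] at hk
      exact absurd hk (by omega)
    · intro ha
      have h1 : 0 < a := p₂.parts_pos ha
      have h2 : a ≤ n := aux_parts_le p₂ ha
      have hk := key ⟨a - 1, by omega⟩
      have ha' : ((⟨a - 1, by omega⟩ : Fin n) : ℕ) + 1 = a := by
        show a - 1 + 1 = a; omega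
      rw [ha'] at hk
      by_contra hc
      rw [if_pos ha, if_neg hc] at hk
      exact absurd hk (by omega)
  · -- surjective
    intro t ht
    rw [mem_filter] at ht
    obtain ⟨htA, hle⟩ := ht
    rw [hA, mem_filter] at htA
    have htsum := htA.2
    set F : Finset (Fin n) := univ.filter (fun j => (t j : ℕ) = 1) with hF
    have hnodup : (Multiset.map (fun j : Fin n => (j : ℕ) + 1) F.val).Nodup :=
      Multiset.Nodup.map (fun a b hab => Fin.ext (by omega)) F.nodup
    have hpos : ∀ {x : ℕ}, x ∈ Multiset.map (fun j : Fin n => (j : ℕ) + 1) F.val → 0 < x := by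
      intro x hx
      rw [Multiset.mem_map] at hx
      obtain ⟨j, _, hj⟩ := hx
      omega
    have hsum' : (Multiset.map (fun j : Fin n => (j : ℕ) + 1) F.val).sum = n := by
      have h1 : (Multiset.map (fun j : Fin n => (j : ℕ) + 1) F.val).sum
          = ∑ j ∈ F, ((j : ℕ) + 1) := rfl
      rw [h1, hF, Finset.sum_filter]
      have h2 : (∑ a : Fin n, if (t a : ℕ) = 1 then (a : ℕ) + 1 else 0)
          = ∑ i : Fin n, ((i : ℕ) + 1) * (t i : ℕ) := by
        apply Finset.sum_congr rfl
        intro j _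
        rcases Nat.le_one_iff_eq_zero_or_eq_one.mp (hle j) with h' | h' <;> simp [h']
      rw [h2, htsum]
    refine ⟨⟨Multiset.map (fun j : Fin n => (j : ℕ) + 1) F.val, fun {x} hx => hpos hx, hsum'⟩,
      aux_mem_distincts.mpr hnodup, ?_⟩
    funext j
    apply Fin.ext
    rw [hfval]
    show (if (j : ℕ) + 1 ∈ Multiset.map (fun j : Fin n => (j : ℕ) + 1) F.val
        then (1 : ℕ) else 0) = (t j : ℕ)
    have hmem : ((j : ℕ) + 1 ∈ Multiset.map (fun j : Fin n => (j : ℕ) + 1) F.val)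
        ↔ (t j : ℕ) = 1 := by
      rw [Multiset.mem_map]
      constructor
      · rintro ⟨j', hj', hj'eq⟩
        have hjj : j' = j := Fin.ext (by omega)
        subst hjj
        have hj'F : j' ∈ F := hj'
        rw [hF, mem_filter] at hj'F
        exact hj'F.2
      · intro hj
        refine ⟨j, ?_, rfl⟩
        show j ∈ F
        rw [hF, mem_filter]
        exact ⟨mem_univ _, hj⟩
    rcases Nat.le_one_iff_eq_zero_or_eq_one.mp (hle j) with h' | h'
    · rw [if_neg (by rw [hmem]; omega), h']
    · rw [if_pos (hmem.mpr h'), h']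
end

section
/- The identity ∏_{n=1}^∞ (1+q^{2n-1})/(1-q^{2n}) = ∏_{n=1}^∞ (1+q^n)^{v(n)} holds, where v(n) = v₂(n) if n is even and v(n) = v₂(4n-2) if n is odd. -/
open Complex Filter Topology

/-- master lemma: products of `1 + g i` with summable norms and nonvanishing factors. -/
lemma mult_aux {ι : Type*} {g : ι → ℂ} (hne : ∀ i, 1 + g i ≠ 0)
    (hs : Summable fun i ↦ ‖g i‖) :
    Multipliable (fun i ↦ 1 + g i) ∧ (∏' i, (1 + g i)) ≠ 0 := by
  have hlog : Summable fun i ↦ Complex.log (1 + g i) := by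
    have h0 : Tendsto (fun i ↦ ‖g i‖) cofinite (𝓝 0) := by
      simpa using hs.tendsto_cofinite_zero
    have hev : ∀ᶠ i in cofinite, ‖g i‖ ≤ 1/2 :=
      h0.eventually (eventually_le_nhds (by norm_num))
    apply Summable.of_norm_bounded_eventually (g := fun i ↦ (3/2) * ‖g i‖) (hs.mul_left _)
    filter_upwards [hev] with i hi using Complex.norm_log_one_add_half_le_self hi
  have hm : Multipliable (fun i ↦ 1 + g i) :=
    Complex.multipliable_of_summable_log hlog
  refine ⟨hm, ?_⟩
  have := Complex.cexp_tsum_eq_tprod (f := fun i ↦ 1 + g i) hne hlog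
  rw [← this]
  exact Complex.exp_ne_zero _

lemma one_add_ne {z : ℂ} (hz : ‖z‖ < 1) : 1 + z ≠ 0 := by
  intro h
  have : z = -1 := by linear_combination h
  rw [this] at hz; simp at hz

lemma one_sub_ne {z : ℂ} (hz : ‖z‖ < 1) : (1 : ℂ) - z ≠ 0 := by
  intro h
  have : z = 1 := by linear_combination -h
  rw [this] at hz; simp at hz

/-- summability of norms of powers with growing exponents -/
lemma summable_pow_norm {q : ℂ} (hq : ‖q‖ < 1) {s : ℕ → ℕ} (hs : ∀ n, n ≤ s n) :
    Summable fun n ↦ ‖q ^ s n‖ := by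
  simp only [norm_pow]
  apply Summable.of_nonneg_of_le (fun n ↦ by positivity)
    (fun n ↦ pow_le_pow_of_le_one (norm_nonneg q) hq.le (hs n))
    (summable_geometric_of_lt_one (norm_nonneg q) hq)

lemma telescope {y : ℂ} (hy : ‖y‖ < 1) :
    ∏' k : ℕ, (1 + y ^ 2 ^ k) = (1 - y)⁻¹ := by
  have hy1 : (1 : ℂ) - y ≠ 0 := one_sub_ne hy
  have hm : Multipliable fun k : ℕ ↦ 1 + y ^ 2 ^ k := by
    refine (mult_aux (fun k ↦ one_add_ne ?_) (summable_pow_norm hy fun n ↦ (Nat.lt_two_pow_self (n := n)).le)).1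
    rw [norm_pow]
    exact pow_lt_one₀ (norm_nonneg y) hy (by positivity)
  have hpartial : ∀ K : ℕ, ∏ k ∈ Finset.range K, (1 + y ^ 2 ^ k)
      = (1 - y ^ 2 ^ K) * (1 - y)⁻¹ := by
    intro K
    induction K with
    | zero => simp [mul_inv_cancel₀ hy1]
    | succ K ih =>
        rw [Finset.prod_range_succ, ih]
        have : y ^ 2 ^ (K + 1) = (y ^ 2 ^ K) ^ 2 := by
          rw [← pow_mul, ← pow_succ]
        rw [this]
        field_simp
        ring
  have ht : Tendsto (fun K : ℕ ↦ ∏ k ∈ Finset.range K, (1 + y ^ 2 ^ k)) atTop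
      (𝓝 ((1 - y)⁻¹)) := by
    simp only [hpartial]
    have h2 : Tendsto (fun K : ℕ ↦ y ^ 2 ^ K) atTop (𝓝 0) :=
      (tendsto_pow_atTop_nhds_zero_of_norm_lt_one hy).comp
        (tendsto_pow_atTop_atTop_of_one_lt (one_lt_two : (1:ℕ) < 2))
    have := ((tendsto_const_nhds (x := (1:ℂ))).sub h2).mul
      (tendsto_const_nhds (x := (1 - y)⁻¹))
    simpa using this
  exact (hm.hasProd_iff_tendsto_nat.2 ht).tprod_eq

lemma v2_mul_pow (m k : ℕ) : padicValNat 2 ((m + 1) * 2 ^ k) = padicValNat 2 (m + 1) + k := by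
  rw [padicValNat.mul (by omega) (by positivity), padicValNat.prime_pow]

lemma dvd_aux (n : ℕ) (i : Fin (padicValNat 2 (n + 1) + 1)) : 2 ^ (i : ℕ) ∣ n + 1 :=
  dvd_trans (pow_dvd_pow 2 (by omega : (i : ℕ) ≤ padicValNat 2 (n + 1)))
    pow_padicValNat_dvd

lemma recover_aux (n : ℕ) (i : Fin (padicValNat 2 (n + 1) + 1)) :
    ((n + 1) / 2 ^ (i : ℕ) - 1 + 1) * 2 ^ (i : ℕ) = n + 1 := by
  have hdvd := dvd_aux n i
  have ht : 0 < (n + 1) / 2 ^ (i : ℕ) :=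
    Nat.div_pos (Nat.le_of_dvd (by omega) hdvd) (by positivity)
  rw [Nat.sub_add_cancel ht, Nat.div_mul_cancel hdvd]

noncomputable def podEquiv : (Σ n : ℕ, Fin (padicValNat 2 (n + 1) + 1)) ≃ ℕ × ℕ :=
  Equiv.ofBijective (fun ⟨n, i⟩ ↦ ((n + 1) / 2 ^ (i : ℕ) - 1, i)) (by
    constructor
    · rintro ⟨n, i⟩ ⟨n', i'⟩ h
      simp only [Prod.mk.injEq] at h
      obtain ⟨h1, h2⟩ := h
      have hn : n = n' := by
        have e1 := recover_aux n i
        have e2 := recover_aux n' i'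
        rw [h1, h2] at e1
        omega
      subst hn
      have : i = i' := Fin.ext h2
      rw [this]
    · rintro ⟨m, k⟩
      have h1 : (m + 1) * 2 ^ k - 1 + 1 = (m + 1) * 2 ^ k := by
        have : 0 < (m + 1) * 2 ^ k := by positivity
        omega
      refine ⟨⟨(m + 1) * 2 ^ k - 1, ⟨k, by rw [h1, v2_mul_pow]; omega⟩⟩, ?_⟩
      simp only [Prod.mk.injEq]
      refine ⟨?_, trivial⟩
      rw [h1, Nat.mul_div_cancel _ (by positivity : 0 < 2 ^ k)]
      omega)

lemma podEquiv_fst (σ : Σ n : ℕ, Fin (padicValNat 2 (n + 1) + 1)) :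
    ((podEquiv σ).1 + 1) * 2 ^ (podEquiv σ).2 = σ.1 + 1 := by
  obtain ⟨n, i⟩ := σ
  exact recover_aux n i

lemma norm_pow_lt {x : ℂ} (hx : ‖x‖ < 1) {e : ℕ} (he : 1 ≤ e) : ‖x ^ e‖ < 1 := by
  rw [norm_pow]
  exact pow_lt_one₀ (norm_nonneg x) hx (by omega)

lemma exp_ge (m k : ℕ) : m + k + 1 ≤ (m + 1) * 2 ^ k := by
  have h2 : k < 2 ^ k := Nat.lt_two_pow_self
  nlinarith

lemma keyLemma {x : ℂ} (hx : ‖x‖ < 1) :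
    Multipliable (fun n : ℕ ↦ (1 + x ^ (n + 1)) ^ (padicValNat 2 (n + 1) + 1)) ∧
    ∏' n : ℕ, (1 - x ^ (n + 1))⁻¹
      = ∏' n : ℕ, (1 + x ^ (n + 1)) ^ (padicValNat 2 (n + 1) + 1) := by
  set F : ℕ × ℕ → ℂ := fun p ↦ 1 + x ^ ((p.1 + 1) * 2 ^ p.2) with hF
  have hFne : ∀ p : ℕ × ℕ, F p ≠ 0 := fun p ↦
    one_add_ne (norm_pow_lt hx (by have := exp_ge p.1 p.2; omega))
  have hFs : Summable fun p : ℕ × ℕ ↦ ‖x ^ ((p.1 + 1) * 2 ^ p.2)‖ := by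
    have hgeo : Summable fun n : ℕ ↦ ‖x‖ ^ n :=
      summable_geometric_of_lt_one (norm_nonneg x) hx
    refine Summable.of_nonneg_of_le (fun p ↦ by positivity) ?_
      (hgeo.mul_of_nonneg hgeo (fun n ↦ by positivity) (fun n ↦ by positivity))
    intro p
    rw [norm_pow, ← pow_add]
    exact pow_le_pow_of_le_one (norm_nonneg x) hx.le (by have := exp_ge p.1 p.2; omega)
  have hFm : Multipliable F := (mult_aux hFne hFs).1
  have hrow : ∀ m : ℕ, Multipliable fun k ↦ F (m, k) := by
    intro m
    exact (mult_aux (fun k ↦ hFne (m, k))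
      (summable_pow_norm hx (fun k ↦ by
        show k ≤ (m + 1) * 2 ^ k
        have := exp_ge m k; omega))).1
  have step1 : ∏' p, F p = ∏' (m : ℕ) (k : ℕ), F (m, k) := Multipliable.tprod_prod' hFm hrow
  have step2 : ∀ m : ℕ, ∏' k : ℕ, F (m, k) = (1 - x ^ (m + 1))⁻¹ := by
    intro m
    have h1 : ∀ k : ℕ, F (m, k) = 1 + (x ^ (m + 1)) ^ 2 ^ k := by
      intro k; rw [hF]; simp only [← pow_mul]
    rw [tprod_congr h1, telescope (norm_pow_lt hx (by omega))]
  -- sigma side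
  set G : (Σ n : ℕ, Fin (padicValNat 2 (n + 1) + 1)) → ℂ :=
    fun σ ↦ 1 + x ^ (σ.1 + 1) with hG
  have hGF : ∀ σ, F (podEquiv σ) = G σ := by
    intro σ; rw [hF, hG]; simp only; rw [podEquiv_fst σ]
  have hGm : Multipliable G :=
    ((podEquiv.multipliable_iff (f := F)).2 hFm).congr hGF
  have hfin : ∀ n : ℕ, Multipliable fun i : Fin (padicValNat 2 (n + 1) + 1) ↦
      G ⟨n, i⟩ := fun n ↦ ⟨_, hasProd_fintype _⟩
  have hinner : ∀ n : ℕ, ∏' i : Fin (padicValNat 2 (n + 1) + 1), G ⟨n, i⟩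
      = (1 + x ^ (n + 1)) ^ (padicValNat 2 (n + 1) + 1) := by
    intro n
    rw [tprod_fintype]
    simp [hG, Finset.prod_const]
  have hmultR : Multipliable
      (fun n : ℕ ↦ (1 + x ^ (n + 1)) ^ (padicValNat 2 (n + 1) + 1)) :=
    (hGm.sigma' hfin).congr hinner
  refine ⟨hmultR, ?_⟩
  calc ∏' n : ℕ, (1 - x ^ (n + 1))⁻¹
      = ∏' (m : ℕ) (k : ℕ), F (m, k) := by rw [← step1, ← tprod_congr step2, step1]
    _ = ∏' p, F p := step1.symm
    _ = ∏' σ, G σ := by rw [← podEquiv.tprod_eq F]; exact tprod_congr hGF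
    _ = ∏' n : ℕ, ∏' i : Fin (padicValNat 2 (n + 1) + 1), G ⟨n, i⟩ :=
        Multipliable.tprod_sigma' hfin hGm
    _ = ∏' n : ℕ, (1 + x ^ (n + 1)) ^ (padicValNat 2 (n + 1) + 1) :=
        tprod_congr hinner


/-- The exponent `v(n)`: `v₂(n)` if `n` is even, `v₂(4n-2)` if `n` is odd. -/
def vPod (n : ℕ) : ℕ :=
  if Even n then padicValNat 2 n else padicValNat 2 (4 * n - 2)

lemma vPod_odd (m : ℕ) : vPod (2 * m + 1) = 1 := by
  have hodd : ¬ Even (2 * m + 1) := by simp [Nat.even_add_one, parity_simps]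
  rw [vPod, if_neg hodd]
  have h4 : 4 * (2 * m + 1) - 2 = 2 * (4 * m + 1) := by ring_nf; omega
  rw [h4, padicValNat.mul (by omega) (by omega), padicValNat.self (by omega),
    padicValNat.eq_zero_of_not_dvd (by omega)]

lemma vPod_even (m : ℕ) : vPod (2 * m + 2) = padicValNat 2 (m + 1) + 1 := by
  have heven : Even (2 * m + 2) := ⟨m + 1, by ring⟩
  rw [vPod, if_pos heven]
  have h2 : 2 * m + 2 = 2 * (m + 1) := by ring
  rw [h2, padicValNat.mul (by omega) (by omega), padicValNat.self (by omega)]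
  omega

/-- `∏_{n≥1} (1+q^{2n-1})/(1-q^{2n}) = ∏_{n≥1} (1+q^n)^{v(n)}` for `|q| < 1`. -/
theorem pod_genfun_eq (q : ℂ) (hq : ‖q‖ < 1) :
    (∏' n : ℕ, (1 + q ^ (2 * n + 1)) / (1 - q ^ (2 * (n + 1)))) =
      ∏' n : ℕ, (1 + q ^ (n + 1)) ^ vPod (n + 1) := by
  have hq2 : ‖q ^ 2‖ < 1 := norm_pow_lt hq (by omega)
  have hqsq : ∀ n : ℕ, q ^ (2 * (n + 1)) = (q ^ 2) ^ (n + 1) := fun n ↦ pow_mul q 2 (n + 1)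
  -- the odd-part product
  have multA : Multipliable fun n : ℕ ↦ 1 + q ^ (2 * n + 1) :=
    (mult_aux (fun n ↦ one_add_ne (norm_pow_lt hq (by omega)))
      (summable_pow_norm hq (fun n ↦ by omega))).1
  -- the inverse-denominator product
  have hBne : ∀ n : ℕ, (1 : ℂ) - q ^ (2 * (n + 1)) ≠ 0 :=
    fun n ↦ one_sub_ne (norm_pow_lt hq (by omega))
  have multBinv : Multipliable fun n : ℕ ↦ (1 - q ^ (2 * (n + 1)))⁻¹ := by
    have heq : ∀ n : ℕ, 1 + q ^ (2 * (n + 1)) * (1 - q ^ (2 * (n + 1)))⁻¹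
        = (1 - q ^ (2 * (n + 1)))⁻¹ := by
      intro n
      have h := hBne n
      field_simp
      ring
    refine ((mult_aux (g := fun n ↦ q ^ (2 * (n + 1)) * (1 - q ^ (2 * (n + 1)))⁻¹)
      (fun n ↦ ?_) ?_).1).congr heq
    · rw [heq n]
      exact inv_ne_zero (hBne n)
    · -- summability of norms
      have hc : (0:ℝ) < 1 - ‖q‖ ^ 2 := by
        have : ‖q‖ ^ 2 < 1 := by simpa [norm_pow] using hq2
        linarith
      refine Summable.of_nonneg_of_le (fun n ↦ by positivity) ?_
        (((summable_geometric_of_lt_one (norm_nonneg q) hq).mul_right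
          ((1 - ‖q‖ ^ 2)⁻¹)))
      intro n
      rw [norm_mul, norm_pow, norm_inv]
      have h1 : ‖q‖ ^ (2 * (n + 1)) ≤ ‖q‖ ^ n :=
        pow_le_pow_of_le_one (norm_nonneg q) hq.le (by omega)
      have h2 : 1 - ‖q‖ ^ 2 ≤ ‖1 - q ^ (2 * (n + 1))‖ := by
        have := norm_sub_norm_le (1 : ℂ) (q ^ (2 * (n + 1)))
        have h3 : ‖q ^ (2 * (n + 1))‖ ≤ ‖q‖ ^ 2 := by
          rw [norm_pow]
          exact pow_le_pow_of_le_one (norm_nonneg q) hq.le (by omega)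
        simp only [norm_one] at this
        linarith
      have h4 : ‖1 - q ^ (2 * (n + 1))‖⁻¹ ≤ (1 - ‖q‖ ^ 2)⁻¹ :=
        inv_anti₀ hc h2
      exact mul_le_mul h1 h4 (by positivity) (by positivity)
  -- evaluate the inverse product via keyLemma
  have hBval : ∏' n : ℕ, (1 - q ^ (2 * (n + 1)))⁻¹
      = ∏' n : ℕ, (1 + (q ^ 2) ^ (n + 1)) ^ (padicValNat 2 (n + 1) + 1) := by
    rw [tprod_congr (fun n ↦ by rw [hqsq n])]
    exact (keyLemma hq2).2
  -- split LHS
  have hLHS : (∏' n : ℕ, (1 + q ^ (2 * n + 1)) / (1 - q ^ (2 * (n + 1))))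
      = (∏' n : ℕ, (1 + q ^ (2 * n + 1))) * ∏' n : ℕ, (1 - q ^ (2 * (n + 1)))⁻¹ := by
    rw [← Multipliable.tprod_mul multA multBinv]
    exact tprod_congr fun n ↦ div_eq_mul_inv _ _
  -- split RHS into even and odd indexed factors
  have hf : (fun n : ℕ ↦ (1 + q ^ (n + 1)) ^ vPod (n + 1)) = fun n : ℕ ↦ (1 + q ^ (n + 1)) ^ vPod (n + 1) := rfl
  have hfe : ∀ k : ℕ, (1 + q ^ (2 * k + 1)) ^ vPod (2 * k + 1) = 1 + q ^ (2 * k + 1) := by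
    intro k
    rw [vPod_odd k, pow_one]
  have hfo : ∀ k : ℕ, (1 + q ^ (2 * k + 1 + 1)) ^ vPod (2 * k + 1 + 1)
      = (1 + (q ^ 2) ^ (k + 1)) ^ (padicValNat 2 (k + 1) + 1) := by
    intro k
    have h1 : 2 * k + 1 + 1 = 2 * k + 2 := rfl
    rw [h1, vPod_even k]
    congr 1
    rw [show 2 * k + 2 = 2 * (k + 1) by ring, hqsq k]
  have multE : Multipliable fun k ↦ (1 + q ^ (2 * k + 1)) ^ vPod (2 * k + 1) :=
    multA.congr (fun k ↦ (hfe k).symm)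
  have multO : Multipliable fun k ↦ (1 + q ^ (2 * k + 1 + 1)) ^ vPod (2 * k + 1 + 1) :=
    (keyLemma hq2).1.congr (fun k ↦ (hfo k).symm)
  have hsplit := tprod_even_mul_odd (f := fun n ↦ (1 + q ^ (n + 1)) ^ vPod (n + 1)) multE multO
  rw [hLHS, ← hsplit, tprod_congr hfe, tprod_congr hfo, hBval]
end

section
/- The identity ∏_{n=1}^∞ 1/(1-q^{2n}) = ∏_{n=1}^∞ (1+q^n)^{v₂(n)} holds as formal power series (note that factors with n odd contribute trivially since v₂(n)=0). -/
open Complex Filter Finset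

/-- Summability of logs of `1 + g i` given norm-summability of `g`. -/
lemma summable_log_one_add' {ι : Type*} {g : ι → ℂ} (hg : Summable fun i => ‖g i‖) :
    Summable fun i => Complex.log (1 + g i) := by
  refine Summable.of_norm_bounded_eventually (hg.mul_left (3/2)) ?_
  have h := hg.tendsto_cofinite_zero
  filter_upwards [h.eventually (ge_mem_nhds (by norm_num : (0:ℝ) < 1/2))] with i hi
  exact Complex.norm_log_one_add_half_le_self (by simpa using hi)

lemma multipliable_one_add' {ι : Type*} {g : ι → ℂ} (hg : Summable fun i => ‖g i‖)
    (h1 : ∀ i, ‖g i‖ < 1) : Multipliable fun i => 1 + g i := by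
  have hs := summable_log_one_add' hg
  have hne : ∀ i, (1 : ℂ) + g i ≠ 0 := by
    intro i h
    have h2 : g i = -1 := by linear_combination h
    have : ‖g i‖ = 1 := by simp [h2]
    linarith [h1 i]
  have heq : (Complex.exp ∘ fun i => Complex.log (1 + g i)) = fun i => 1 + g i :=
    funext fun i => Complex.exp_log (hne i)
  exact ⟨_, heq ▸ hs.hasSum.cexp⟩

/-- Binary expansion identity: `∏_{j≥0} (1+x^{2^j}) = 1/(1-x)`. -/
lemma tprod_one_add_pow_two_pow {x : ℂ} (hx : ‖x‖ < 1) :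
    ∏' j : ℕ, (1 + x ^ 2 ^ j) = (1 - x)⁻¹ := by
  have hx1 : (1 : ℂ) - x ≠ 0 := sub_ne_zero.2 (fun h => by simp [← h] at hx)
  have hsum : Summable fun j : ℕ => ‖x ^ 2 ^ j‖ := by
    refine Summable.of_nonneg_of_le (fun j => norm_nonneg _) (fun j => ?_)
      (summable_geometric_of_lt_one (norm_nonneg x) hx)
    rw [norm_pow]
    exact pow_le_pow_of_le_one (norm_nonneg x) hx.le (Nat.lt_two_pow_self (n := j)).le
  have h1 : ∀ j : ℕ, ‖x ^ 2 ^ j‖ < 1 := fun j => by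
    rw [norm_pow]; exact pow_lt_one₀ (norm_nonneg x) hx (Nat.pos_of_ne_zero (by positivity)).ne'
  have hM : Multipliable fun j : ℕ => 1 + x ^ 2 ^ j := multipliable_one_add' hsum h1
  have key : ∀ J : ℕ, ∏ j ∈ Finset.range J, (1 + x ^ 2 ^ j) = (1 - x ^ 2 ^ J) / (1 - x) := by
    intro J
    induction J with
    | zero => simp [div_self hx1]
    | succ J ih =>
      rw [Finset.prod_range_succ, ih, div_mul_eq_mul_div, pow_succ, pow_mul]
      congr 1
      ring
  have h2 : Tendsto (fun J : ℕ => x ^ 2 ^ J) atTop (nhds 0) :=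
    (tendsto_pow_atTop_nhds_zero_of_norm_lt_one hx).comp
      (tendsto_pow_atTop_atTop_of_one_lt one_lt_two)
  have h3 : Tendsto (fun J : ℕ => (1 - x ^ 2 ^ J) / (1 - x)) atTop (nhds ((1 - 0) / (1 - x))) :=
    (tendsto_const_nhds.sub h2).div_const _
  have h4 := hM.hasProd.tendsto_prod_nat
  simp only [key] at h4
  have := tendsto_nhds_unique h4 h3
  rw [this, sub_zero, one_div]

lemma val_lt (j m : ℕ) : j < padicValNat 2 ((2 ^ (j + 1) * (m + 1) - 1) + 1) := by
  have hpos : 0 < 2 ^ (j + 1) * (m + 1) := by positivity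
  rw [Nat.sub_add_cancel hpos,
    padicValNat.mul (by positivity) (Nat.succ_ne_zero m), padicValNat.prime_pow]
  omega

/-- Pairs `(j, m)` correspond to pairs `(n, j)` with `j < v₂(n+1)` via `n+1 = 2^(j+1)(m+1)`. -/
def pairEquiv : ℕ × ℕ ≃ Σ n : ℕ, Fin (padicValNat 2 (n + 1)) where
  toFun p := ⟨2 ^ (p.1 + 1) * (p.2 + 1) - 1, ⟨p.1, val_lt p.1 p.2⟩⟩
  invFun s := (s.2.1, (s.1 + 1) / 2 ^ (s.2.1 + 1) - 1)
  left_inv p := by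
    obtain ⟨j, m⟩ := p
    have hpos : 0 < 2 ^ (j + 1) * (m + 1) := by positivity
    dsimp only
    rw [Nat.sub_add_cancel hpos, Nat.mul_div_cancel_left _ (by positivity : 0 < 2 ^ (j + 1))]
    simp
  right_inv s := by
    obtain ⟨n, j⟩ := s
    dsimp only
    have hdvd : 2 ^ (j.1 + 1) ∣ n + 1 :=
      dvd_trans (pow_dvd_pow 2 (by omega : j.1 + 1 ≤ padicValNat 2 (n + 1)))
        pow_padicValNat_dvd
    have h1 : 1 ≤ (n + 1) / 2 ^ (j.1 + 1) :=
      (Nat.one_le_div_iff (by positivity)).2 (Nat.le_of_dvd n.succ_pos hdvd)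
    have key : 2 ^ (j.1 + 1) * ((n + 1) / 2 ^ (j.1 + 1) - 1 + 1) - 1 = n := by
      rw [Nat.sub_add_cancel h1, Nat.mul_div_cancel' hdvd]
      rfl
    refine Sigma.ext key ?_
    exact (Fin.heq_ext_iff (congrArg (fun t => padicValNat 2 (t + 1)) key)).2 rfl

/-- `∏_{n≥1} 1/(1-q^{2n}) = ∏_{n≥1} (1+q^n)^{v₂(n)}` for `|q| < 1`
(factors with `n` odd contribute trivially since `v₂(n) = 0`). -/
theorem even_parts_genfun_eq (q : ℂ) (hq : ‖q‖ < 1) :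
    (∏' n : ℕ, (1 - q ^ (2 * (n + 1)))⁻¹) =
      ∏' n : ℕ, (1 + q ^ (n + 1)) ^ padicValNat 2 (n + 1) := by
  have hqn : ∀ N : ℕ, N ≠ 0 → ‖q ^ N‖ < 1 := fun N hN => by
    rw [norm_pow]; exact pow_lt_one₀ (norm_nonneg q) hq hN
  set f : ℕ × ℕ → ℂ := fun p => 1 + q ^ (2 ^ (p.1 + 1) * (p.2 + 1)) with hf
  have hgeo := summable_geometric_of_lt_one (norm_nonneg q) hq
  have h1 : Summable fun j : ℕ => ‖q‖ ^ (j + 1) := by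
    simpa [pow_succ] using hgeo.mul_right ‖q‖
  have hsum : Summable fun p : ℕ × ℕ => ‖q ^ (2 ^ (p.1 + 1) * (p.2 + 1))‖ := by
    refine Summable.of_nonneg_of_le (fun _ => norm_nonneg _) (fun p => ?_)
      (h1.mul_of_nonneg h1 (fun j => by positivity) (fun m => by positivity))
    obtain ⟨j, m⟩ := p
    rw [norm_pow, ← pow_add]
    refine pow_le_pow_of_le_one (norm_nonneg q) hq.le ?_
    have h2 : j + 2 ≤ 2 ^ (j + 1) := Nat.lt_two_pow_self (n := j + 1)
    nlinarith
  have hmul : Multipliable f :=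
    multipliable_one_add' hsum (fun p => hqn _ (by positivity))
  set F : (Σ n : ℕ, Fin (padicValNat 2 (n + 1))) → ℂ := fun s => 1 + q ^ (s.1 + 1) with hF
  have hFe : (F ∘ pairEquiv) = f := by
    funext p
    obtain ⟨j, m⟩ := p
    have hpos : 0 < 2 ^ (j + 1) * (m + 1) := by positivity
    simp only [hF, hf, Function.comp, pairEquiv, Equiv.coe_fn_mk,
      Nat.sub_add_cancel hpos]
  have hFmul : Multipliable F := (pairEquiv.multipliable_iff).1 (hFe ▸ hmul)
  have hfac1 : ∀ j : ℕ, Multipliable fun m : ℕ => f (j, m) := fun j =>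
    multipliable_one_add' (g := fun m : ℕ => q ^ (2 ^ (j + 1) * (m + 1)))
      (hsum.prod_factor j) (fun m => hqn _ (by positivity))
  have hfac2 : ∀ m : ℕ, Multipliable fun j : ℕ => f (j, m) := fun m =>
    multipliable_one_add' (g := fun j : ℕ => q ^ (2 ^ (j + 1) * (m + 1)))
      (hsum.prod_symm.prod_factor m) (fun j => hqn _ (by positivity))
  have hRHS : (∏' n : ℕ, (1 + q ^ (n + 1)) ^ padicValNat 2 (n + 1)) = ∏' p, f p := by
    calc ∏' n : ℕ, (1 + q ^ (n + 1)) ^ padicValNat 2 (n + 1)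
        = ∏' (n : ℕ) (_ : Fin (padicValNat 2 (n + 1))), (1 + q ^ (n + 1)) := by
          refine (tprod_congr fun n => ?_)
          rw [tprod_fintype]
          simp [Finset.prod_const, Finset.card_univ]
      _ = ∏' s, F s := by
          rw [Multipliable.tprod_sigma' (fun n => Multipliable.of_finite) hFmul]
      _ = ∏' p, f p := by
          rw [← pairEquiv.tprod_eq F]
          exact tprod_congr fun p => congrFun hFe p
  have hLHS : (∏' n : ℕ, (1 - q ^ (2 * (n + 1)))⁻¹) = ∏' (m : ℕ) (j : ℕ), f (j, m) := by
    refine tprod_congr fun m => ?_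
    have hx : ‖q ^ (2 * (m + 1))‖ < 1 := hqn _ (by positivity)
    rw [← tprod_one_add_pow_two_pow hx]
    refine tprod_congr fun j => ?_
    rw [hf, ← pow_mul]
    congr 2
    rw [pow_succ]
    ring
  rw [hLHS, hRHS, Multipliable.tprod_prod' hmul hfac1]
  exact Multipliable.tprod_comm' (f := fun j m => f (j, m)) hmul hfac1 hfac2
end

section
/- The number of partitions of n into even parts equals the sum over all nonnegative integer solutions of t₁ + 2t₂ + ... + n·tₙ = n of ∏_{j=1}^n C(v₂(j), t_j). -/
open Finset

/-- The number of partitions of `n` into even parts. -/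
def evenPartitions (n : ℕ) : ℕ :=
  ((univ : Finset (Nat.Partition n)).filter (fun p => ∀ k ∈ p.parts, Even k)).card

namespace EvenPartAux

lemma count_mul_le_sum (s : Multiset ℕ) (j : ℕ) : s.count j * j ≤ s.sum := by
  conv_rhs => rw [← Multiset.filter_add_not (· = j) s]
  rw [Multiset.sum_add, Multiset.filter_eq', Multiset.sum_replicate, smul_eq_mul]
  exact Nat.le_add_right _ _

lemma two_pow_dvd_iff {a m : ℕ} (hm : m ≠ 0) :
    2 ^ a ∣ m ↔ a ≤ padicValNat 2 m :=
  padicValNat_dvd_iff_le hm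

lemma padicValNat_lt (m : ℕ) (hm : m ≠ 0) : padicValNat 2 m < m :=
  lt_of_lt_of_le (Nat.lt_two_pow_self)
    (Nat.le_of_dvd (Nat.pos_of_ne_zero hm) pow_padicValNat_dvd)

lemma sum_finset_sum {α : Type*} (s : Finset α) (f : α → Multiset ℕ) :
    (∑ x ∈ s, f x).sum = ∑ x ∈ s, (f x).sum := by
  rw [← Multiset.coe_sumAddMonoidHom]
  exact map_sum Multiset.sumAddMonoidHom f s

/-- The bound condition on a family of finsets. -/
def Bnd (n : ℕ) (S : Fin n → Finset (Fin n)) : Prop :=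
  ∀ i : Fin n, ∀ a ∈ S i, (a : ℕ) + 1 ≤ padicValNat 2 ((i : ℕ) + 1)

/-- The multiset of parts attached to a family of finsets. -/
def MM (n : ℕ) (S : Fin n → Finset (Fin n)) : Multiset ℕ :=
  ∑ i : Fin n, ∑ a ∈ S i, Multiset.replicate (2 ^ (a : ℕ)) (((i : ℕ) + 1) / 2 ^ (a : ℕ))

/-- The family of finsets attached to a partition. -/
def Phi (n : ℕ) (p : Nat.Partition n) (i : Fin n) : Finset (Fin n) :=
  univ.filter (fun a : Fin n => 2 ^ ((a : ℕ) + 1) ∣ ((i : ℕ) + 1) ∧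
    (a : ℕ) ∈ (p.parts.count (((i : ℕ) + 1) / 2 ^ (a : ℕ))).bitIndices)

lemma Bnd_Phi (n : ℕ) (p : Nat.Partition n) : Bnd n (Phi n p) := by
  intro i a ha
  rw [Phi, mem_filter] at ha
  exact (two_pow_dvd_iff (by omega)).mp ha.2.1

lemma dvd_of_bnd {n : ℕ} {S : Fin n → Finset (Fin n)} (hS : Bnd n S)
    {i a : Fin n} (ha : a ∈ S i) : 2 ^ ((a : ℕ) + 1) ∣ (i : ℕ) + 1 :=
  (two_pow_dvd_iff (by omega)).mpr (hS i a ha)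

lemma dvd_of_bnd' {n : ℕ} {S : Fin n → Finset (Fin n)} (hS : Bnd n S)
    {i a : Fin n} (ha : a ∈ S i) : 2 ^ (a : ℕ) ∣ (i : ℕ) + 1 :=
  dvd_trans (pow_dvd_pow 2 (Nat.le_succ _)) (dvd_of_bnd hS ha)

lemma MM_mem {n : ℕ} {S : Fin n → Finset (Fin n)} (hS : Bnd n S) :
    ∀ k ∈ MM n S, 0 < k ∧ 2 ∣ k := by
  intro k hk
  rw [MM, Multiset.mem_sum] at hk
  obtain ⟨i, -, hk⟩ := hk
  rw [Multiset.mem_sum] at hk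
  obtain ⟨a, ha, hk⟩ := hk
  have hk' := Multiset.eq_of_mem_replicate hk
  obtain ⟨m, hm⟩ := dvd_of_bnd hS ha
  have hm0 : 0 < m := by
    rcases Nat.eq_zero_or_pos m with h | h
    · rw [h, mul_zero] at hm; omega
    · exact h
  have : ((i : ℕ) + 1) / 2 ^ (a : ℕ) = 2 * m := by
    rw [hm, pow_succ, mul_assoc]
    exact Nat.mul_div_cancel_left _ (by positivity)
  rw [hk', this]
  exact ⟨by omega, ⟨m, rfl⟩⟩

lemma MM_sum {n : ℕ} {S : Fin n → Finset (Fin n)} (hS : Bnd n S) :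
    (MM n S).sum = ∑ i : Fin n, ((i : ℕ) + 1) * (S i).card := by
  rw [MM, sum_finset_sum]
  refine Finset.sum_congr rfl fun i _ => ?_
  rw [sum_finset_sum]
  have h1 : ∀ a ∈ S i,
      (Multiset.replicate (2 ^ (a : ℕ)) (((i : ℕ) + 1) / 2 ^ (a : ℕ))).sum = (i : ℕ) + 1 := by
    intro a ha
    rw [Multiset.sum_replicate, smul_eq_mul, Nat.mul_div_cancel' (dvd_of_bnd' hS ha)]
  rw [Finset.sum_congr rfl h1, Finset.sum_const, smul_eq_mul, mul_comm]

lemma count_MM {n : ℕ} {S : Fin n → Finset (Fin n)} (hS : Bnd n S) (j : ℕ) :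
    (MM n S).count j =
      ∑ b ∈ (univ.filter (fun a : Fin n =>
          ∃ i : Fin n, (i : ℕ) + 1 = j * 2 ^ (a : ℕ) ∧ a ∈ S i)).image Fin.val, 2 ^ b := by
  rw [Finset.sum_image (fun x _ y _ h => Fin.val_injective h), Finset.sum_filter]
  rw [MM]
  simp_rw [Multiset.count_sum', Multiset.count_replicate]
  have step1 : ∀ i : Fin n,
      (∑ a ∈ S i, if ((i : ℕ) + 1) / 2 ^ (a : ℕ) = j then 2 ^ (a : ℕ) else 0)
        = ∑ a : Fin n, if a ∈ S i ∧ (i : ℕ) + 1 = j * 2 ^ (a : ℕ)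
            then 2 ^ (a : ℕ) else 0 := by
    intro i
    rw [← Finset.sum_filter, ← Finset.sum_filter]
    refine Finset.sum_congr ?_ fun _ _ => rfl
    ext a
    simp only [mem_filter, mem_univ, true_and]
    constructor
    · rintro ⟨ha, hj⟩
      refine ⟨ha, ?_⟩
      rw [← hj, Nat.div_mul_cancel (dvd_of_bnd' hS ha)]
    · rintro ⟨ha, hj⟩
      refine ⟨ha, ?_⟩
      rw [hj, Nat.mul_div_cancel _ (by positivity)]
  rw [Finset.sum_congr rfl fun i _ => step1 i, Finset.sum_comm]
  refine Finset.sum_congr rfl fun a _ => ?_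
  by_cases hex : ∃ i : Fin n, (i : ℕ) + 1 = j * 2 ^ (a : ℕ) ∧ a ∈ S i
  · obtain ⟨i₀, hi₀, hai₀⟩ := hex
    rw [if_pos ⟨i₀, hi₀, hai₀⟩, Finset.sum_eq_single i₀]
    · rw [if_pos ⟨hai₀, hi₀⟩]
    · intro i _ hne
      rw [if_neg]
      rintro ⟨hai, hi⟩
      exact hne (Fin.ext (by omega))
    · intro h; exact absurd (mem_univ i₀) h
  · rw [if_neg hex]
    refine Finset.sum_eq_zero fun i _ => ?_
    rw [if_neg]
    rintro ⟨hai, hi⟩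
    exact hex ⟨i, hi, hai⟩

lemma count_MM_Phi {n : ℕ} (p : Nat.Partition n) (hp : ∀ k ∈ p.parts, Even k) (j : ℕ) :
    (MM n (Phi n p)).count j = p.parts.count j := by
  rw [count_MM (Bnd_Phi n p) j]
  by_cases hj0 : j = 0
  · subst hj0
    rw [Multiset.count_eq_zero_of_notMem (fun h => lt_irrefl 0 (p.parts_pos h))]
    rw [Finset.filter_false_of_mem, Finset.image_empty, Finset.sum_empty]
    rintro a - ⟨i, hi, -⟩
    simp at hi
  by_cases hj2 : 2 ∣ j
  · have himg : (univ.filter (fun a : Fin n =>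
        ∃ i : Fin n, (i : ℕ) + 1 = j * 2 ^ (a : ℕ) ∧ a ∈ Phi n p i)).image Fin.val
          = (p.parts.count j).bitIndices.toFinset := by
      ext b
      simp only [Finset.mem_image, mem_filter, mem_univ, true_and, List.mem_toFinset]
      constructor
      · rintro ⟨a, ⟨i, hi, hai⟩, rfl⟩
        rw [Phi, mem_filter] at hai
        have hdiv : ((i : ℕ) + 1) / 2 ^ (a : ℕ) = j := by
          rw [hi, Nat.mul_div_cancel _ (by positivity)]
        rw [hdiv] at hai
        exact hai.2.2
      · intro hb
        have h1 : 2 ^ b ≤ p.parts.count j := Nat.two_pow_le_of_mem_bitIndices hb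
        have hj1 : 1 ≤ j := Nat.one_le_iff_ne_zero.mpr hj0
        have h2 : j * 2 ^ b ≤ n := by
          calc j * 2 ^ b ≤ j * p.parts.count j := Nat.mul_le_mul_left _ h1
            _ = p.parts.count j * j := Nat.mul_comm _ _
            _ ≤ p.parts.sum := count_mul_le_sum _ _
            _ = n := p.parts_sum
        have hbpow : b < 2 ^ b := Nat.lt_two_pow_self
        have hle : 2 ^ b ≤ j * 2 ^ b := Nat.le_mul_of_pos_left _ hj1
        have hjn : 1 ≤ j * 2 ^ b := le_trans (Nat.one_le_two_pow) hle
        have hbn : b < n := by omega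
        have hin : j * 2 ^ b - 1 < n := by omega
        refine ⟨⟨b, hbn⟩, ⟨⟨j * 2 ^ b - 1, hin⟩, by simp; omega, ?_⟩, rfl⟩
        rw [Phi, mem_filter]
        obtain ⟨m, hm⟩ := hj2
        have hval : ((⟨j * 2 ^ b - 1, hin⟩ : Fin n) : ℕ) + 1 = j * 2 ^ b := by
          simp; omega
        refine ⟨mem_univ _, ?_, ?_⟩
        · rw [hval, hm, pow_succ]
          exact ⟨m, by ring⟩
        · rw [hval, Nat.mul_div_cancel _ (by positivity)]
          exact hb
    rw [himg, Finset.twoPowSum_toFinset_bitIndices]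
  · have hcnt : p.parts.count j = 0 := by
      rw [Multiset.count_eq_zero_of_notMem]
      intro h
      obtain ⟨m, hm⟩ := hp j h
      exact hj2 ⟨m, by omega⟩
    rw [hcnt, Finset.filter_false_of_mem, Finset.image_empty, Finset.sum_empty]
    rintro a - ⟨i, hi, hai⟩
    rw [Phi, mem_filter] at hai
    have hdd := hai.2.1
    rw [hi, pow_succ, mul_comm j (2 ^ (a : ℕ))] at hdd
    exact hj2 ((mul_dvd_mul_iff_left (show (2:ℕ) ^ (a:ℕ) ≠ 0 by positivity)).mp hdd)

lemma Phi_MM {n : ℕ} {S : Fin n → Finset (Fin n)} (hS : Bnd n S)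
    (p : Nat.Partition n) (hp : p.parts = MM n S) : Phi n p = S := by
  have key : ∀ j : ℕ, ((MM n S).count j).bitIndices.toFinset
      = (univ.filter (fun a : Fin n =>
          ∃ i : Fin n, (i : ℕ) + 1 = j * 2 ^ (a : ℕ) ∧ a ∈ S i)).image Fin.val := by
    intro j
    rw [count_MM hS j, Finset.toFinset_bitIndices_twoPowSum]
  funext i
  ext a
  rw [Phi, mem_filter]
  simp only [mem_univ, true_and]
  constructor
  · rintro ⟨hdvd, hbit⟩
    have hdvd' : 2 ^ (a : ℕ) ∣ (i : ℕ) + 1 :=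
      dvd_trans (pow_dvd_pow 2 (Nat.le_succ _)) hdvd
    rw [hp, ← List.mem_toFinset, key] at hbit
    simp only [Finset.mem_image, mem_filter, mem_univ, true_and] at hbit
    obtain ⟨a', ⟨i', hi', ha'⟩, hval⟩ := hbit
    have ha'a : a' = a := Fin.val_injective hval
    subst ha'a
    have : (i' : ℕ) + 1 = (i : ℕ) + 1 := by
      rw [hi', Nat.div_mul_cancel hdvd']
    have : i' = i := Fin.ext (by omega)
    subst this
    exact ha'
  · intro ha
    refine ⟨dvd_of_bnd hS ha, ?_⟩
    rw [hp, ← List.mem_toFinset, key]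
    simp only [Finset.mem_image, mem_filter, mem_univ, true_and]
    exact ⟨a, ⟨i, (Nat.div_mul_cancel (dvd_of_bnd' hS ha)).symm, ha⟩, rfl⟩

end EvenPartAux

open EvenPartAux in
/-- The number of partitions of `n` into even parts equals the sum, over all
nonnegative integer solutions of `t₁ + 2t₂ + ⋯ + n·tₙ = n`, of
`∏_{j=1}^n C(v₂(j), t_j)`. -/
theorem evenPartitions_eq_sum (n : ℕ) (hn : 0 < n) :
    evenPartitions n =
      ∑ t ∈ (univ : Finset (Fin n → Fin (n + 1))).filter
          (fun t => ∑ i : Fin n, ((i : ℕ) + 1) * (t i : ℕ) = n),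
        ∏ i : Fin n, Nat.choose (padicValNat 2 ((i : ℕ) + 1)) (t i : ℕ) := by
  classical
  set V : Fin n → Finset (Fin n) :=
    fun i => univ.filter (fun a : Fin n => (a : ℕ) + 1 ≤ padicValNat 2 ((i : ℕ) + 1)) with hV
  have cardV : ∀ i : Fin n, (V i).card = padicValNat 2 ((i : ℕ) + 1) := by
    intro i
    have hvn : padicValNat 2 ((i : ℕ) + 1) ≤ n := by
      have h1 := padicValNat_lt ((i : ℕ) + 1) (by omega)
      have h2 := i.2
      omega
    rw [← Finset.card_image_of_injective (V i) Fin.val_injective]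
    have himg : (V i).image Fin.val = Finset.range (padicValNat 2 ((i : ℕ) + 1)) := by
      ext b
      simp only [hV, Finset.mem_image, mem_filter, mem_univ, true_and, Finset.mem_range]
      constructor
      · rintro ⟨a, ha, rfl⟩; omega
      · intro hb; exact ⟨⟨b, by omega⟩, by simpa using hb, rfl⟩
    rw [himg, Finset.card_range]
  set A : Finset (Fin n → Finset (Fin n)) :=
    univ.filter (fun S => Bnd n S ∧ ∑ i : Fin n, ((i : ℕ) + 1) * (S i).card = n) with hA
  have part1 : evenPartitions n = A.card := by
    rw [evenPartitions]
    refine Finset.card_bij' (fun p _ => Phi n p)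
      (fun S hS => Nat.Partition.mk (MM n S) ?_ ?_) ?_ ?_ ?_ ?_
    · intro k hk
      exact (MM_mem (mem_filter.mp hS).2.1 k hk).1
    · rw [MM_sum (mem_filter.mp hS).2.1]
      exact (mem_filter.mp hS).2.2
    · intro p hp
      have hM : MM n (Phi n p) = p.parts :=
        Multiset.ext.mpr fun j => count_MM_Phi p (mem_filter.mp hp).2 j
      rw [hA, mem_filter]
      refine ⟨mem_univ _, Bnd_Phi n p, ?_⟩
      rw [← MM_sum (Bnd_Phi n p), hM, p.parts_sum]
    · intro S hS
      rw [mem_filter]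
      refine ⟨mem_univ _, fun k hk => ?_⟩
      obtain ⟨m, hm⟩ := (MM_mem (mem_filter.mp hS).2.1 k hk).2
      exact ⟨m, by omega⟩
    · intro p hp
      have hM : MM n (Phi n p) = p.parts :=
        Multiset.ext.mpr fun j => count_MM_Phi p (mem_filter.mp hp).2 j
      exact Nat.Partition.ext hM
    · intro S hS
      exact Phi_MM (mem_filter.mp hS).2.1 _ rfl
  rw [part1]
  have hcardle : ∀ (S : Fin n → Finset (Fin n)) (i : Fin n), (S i).card < n + 1 :=
    fun S i => Nat.lt_succ_of_le (le_trans (Finset.card_le_univ _) (by simp))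
  rw [Finset.card_eq_sum_card_fiberwise
    (f := fun S (i : Fin n) => (⟨(S i).card, hcardle S i⟩ : Fin (n + 1)))
    (t := (univ : Finset (Fin n → Fin (n + 1))).filter
      (fun t => ∑ i : Fin n, ((i : ℕ) + 1) * (t i : ℕ) = n))
    (fun S hS => by
      rw [Finset.mem_coe, mem_filter]
      exact ⟨mem_univ _, by simpa using (mem_filter.mp (Finset.mem_coe.mp hS)).2.2⟩)]
  refine Finset.sum_congr rfl fun t ht => ?_
  have hfib : A.filter
      (fun S => (fun i => (⟨(S i).card, hcardle S i⟩ : Fin (n + 1))) = t)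
        = Fintype.piFinset (fun i => (V i).powersetCard ((t i : ℕ))) := by
    ext S
    simp only [Fintype.mem_piFinset, mem_filter, mem_univ, true_and, Finset.mem_powersetCard,
      funext_iff, Fin.ext_iff, hA]
    constructor
    · rintro ⟨⟨hb, -⟩, hcard⟩ i
      refine ⟨fun a ha => ?_, hcard i⟩
      rw [hV, mem_filter]
      exact ⟨mem_univ _, hb i a ha⟩
    · intro h
      have hsub : Bnd n S := by
        intro i a ha
        have := (h i).1 ha
        rw [hV, mem_filter] at this
        exact this.2
      refine ⟨⟨hsub, ?_⟩, fun i => (h i).2⟩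
      have := (mem_filter.mp ht).2
      calc ∑ i : Fin n, ((i : ℕ) + 1) * (S i).card
          = ∑ i : Fin n, ((i : ℕ) + 1) * (t i : ℕ) :=
            Finset.sum_congr rfl fun i _ => by rw [(h i).2]
        _ = n := this
  rw [hfib, Fintype.card_piFinset]
  refine Finset.prod_congr rfl fun i _ => ?_
  rw [Finset.card_powersetCard, cardV i]
end
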